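/- arXiv:math-ph/0703003 — 11 statements merged into one kernel-verified Lean document; each statement's English description precedes it below -/
import Mathlib

section
/- For all y, y' ∈ M₂(ℂ), the 4×4 matrices γ(y) and γ(y') satisfy the Clifford relation γ(y)·γ(y') + γ(y')·γ(y) = 2·g(y,y')·I₄. -/
open Matrix

/-- The space of 2×2 complex matrices (the two-spinor tensor square `U ⊗ Ū`). -/
abbrev M2 : Type := Matrix (Fin 2) (Fin 2) ℂ

/-- The space of 4×4 complex matrices, indexed by blocks (endomorphisms of 4-spinor space). -/
abbrev M4 : Type := Matrix (Fin 2 ⊕ Fin 2) (Fin 2 ⊕ Fin 2) ℂ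

/-- The Dirac map in two-spinor (Weyl) form: `γ(y) = fromBlocks 0 (√2·y) (√2·adj y) 0`. -/
noncomputable def diracGamma (y : M2) : M4 :=
  fromBlocks 0 ((Real.sqrt 2 : ℂ) • y) ((Real.sqrt 2 : ℂ) • y.adjugate) 0

/-- The (complexified) Lorentz metric: `g(y,y') = tr y · tr y' − tr (y·y')`. -/
noncomputable def minkG (y y' : M2) : ℂ := y.trace * y'.trace - (y * y').trace

/-- For all `y, y' ∈ M₂(ℂ)`, the Dirac matrices satisfy the Clifford relation
`γ(y)·γ(y') + γ(y')·γ(y) = 2·g(y,y')·I₄`. -/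
theorem clifford_relation (y y' : M2) :
    diracGamma y * diracGamma y' + diracGamma y' * diracGamma y
      = (2 * minkG y y') • (1 : M4) := by
  have h2 : ((Real.sqrt 2 : ℝ) : ℂ) ^ 2 = 2 := by
    norm_cast
    rw [sq, Real.mul_self_sqrt] <;> norm_num
  ext i j
  rcases i with i | i <;> rcases j with j | j <;> fin_cases i <;> fin_cases j <;>
    simp [diracGamma, minkG, fromBlocks_multiply, adjugate_fin_two, trace_fin_two,
      Matrix.mul_apply, Matrix.vecMul, dotProduct, Fin.sum_univ_two, Matrix.one_apply, Matrix.smul_apply] <;>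
    ring_nf <;> rw [h2] <;> ring
end

section
/- The ℝ-subalgebra of M₄(ℂ) generated by the set {γ(v) : v ∈ M₂(ℂ) Hermitian} equals D := { fromBlocks K P (P‡) (K‡) : K, P ∈ M₂(ℂ) }; moreover D is a 16-dimensional real subspace of M₄(ℂ) and M₄(ℂ) = D ⊕ i·D as real vector spaces (D and i·D are the +1 and −1 eigenspaces of the conjugate-linear involution fromBlocks K P Q J ↦ fromBlocks (J‡) (Q‡) (P‡) (K‡)). -/
open Matrix

/-- The ε-adjoint `X‡ := adj(Xᴴ)`. -/
def ddag (X : M2) : M2 := (Xᴴ).adjugate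

/-- The Dirac algebra `D` as a set of block matrices. -/
def diracD : Set M4 := {Φ | ∃ K P : M2, Φ = fromBlocks K P (ddag P) (ddag K)}

/-! ### Auxiliary lemmas about `ddag` -/

lemma ddag_eq (X : M2) :
    ddag X = !![star (X 1 1), -star (X 1 0); -star (X 0 1), star (X 0 0)] := by
  rw [ddag, adjugate_fin_two]
  ext i j
  fin_cases i <;> fin_cases j <;> simp [conjTranspose_apply]

lemma ddag_add (X Y : M2) : ddag (X + Y) = ddag X + ddag Y := by
  ext i j
  fin_cases i <;> fin_cases j <;>
    simp [ddag_eq, Matrix.add_apply, star_add] <;> ring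

lemma ddag_smul (c : ℂ) (X : M2) : ddag (c • X) = star c • ddag X := by
  ext i j
  fin_cases i <;> fin_cases j <;>
    simp [ddag_eq, Matrix.smul_apply, star_mul', smul_eq_mul]

lemma ddag_real_smul (r : ℝ) (X : M2) : ddag (r • X) = r • ddag X := by
  ext i j
  fin_cases i <;> fin_cases j <;>
    simp [ddag_eq, Matrix.smul_apply]

lemma ddag_mul (X Y : M2) : ddag (X * Y) = ddag X * ddag Y := by
  rw [ddag, conjTranspose_mul, adjugate_mul_distrib]; rfl

lemma ddag_ddag (X : M2) : ddag (ddag X) = X := by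
  ext i j
  fin_cases i <;> fin_cases j <;> simp [ddag_eq]

lemma ddag_one : ddag (1 : M2) = 1 := by simp [ddag]

lemma ddag_zero : ddag (0 : M2) = 0 := by simp [ddag]

lemma ddag_sub (X Y : M2) : ddag (X - Y) = ddag X - ddag Y := by
  have := ddag_add (X - Y) Y
  simp only [sub_add_cancel] at this
  rw [eq_sub_iff_add_eq, ← this]

/-! ### Even/odd block maps -/

noncomputable def Ee (X : M2) : M4 := fromBlocks X 0 0 (ddag X)
noncomputable def Oo (X : M2) : M4 := fromBlocks 0 X (ddag X) 0

lemma Ee_mul (X Y : M2) : Ee X * Ee Y = Ee (X * Y) := by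
  simp [Ee, fromBlocks_multiply, ddag_mul]
lemma Oo_mul (X Y : M2) : Oo X * Oo Y = Ee (X * ddag Y) := by
  simp [Oo, Ee, fromBlocks_multiply, ddag_mul, ddag_ddag]
lemma Ee_mul_Oo (X Y : M2) : Ee X * Oo Y = Oo (X * Y) := by
  simp [Oo, Ee, fromBlocks_multiply, ddag_mul]
lemma Ee_add (X Y : M2) : Ee (X + Y) = Ee X + Ee Y := by
  simp [Ee, ddag_add, fromBlocks_add]

/-! ### Pauli matrices -/

noncomputable def s1 : M2 := !![0, 1; 1, 0]
noncomputable def s2 : M2 := !![0, -Complex.I; Complex.I, 0]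
noncomputable def s3 : M2 := !![1, 0; 0, -1]

lemma s1_herm : s1.IsHermitian := by
  show s1ᴴ = s1
  ext i j; fin_cases i <;> fin_cases j <;> simp [s1, conjTranspose_apply]
lemma s2_herm : s2.IsHermitian := by
  show s2ᴴ = s2
  ext i j; fin_cases i <;> fin_cases j <;> simp [s2, conjTranspose_apply]
lemma s3_herm : s3.IsHermitian := by
  show s3ᴴ = s3
  ext i j; fin_cases i <;> fin_cases j <;> simp [s3, conjTranspose_apply]

lemma key_prod : ddag s1 * (s2 * ddag s3) = Complex.I • (1 : M2) := by
  ext i j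
  fin_cases i <;> fin_cases j <;>
    simp [ddag, adjugate_fin_two, s1, s2, s3, conjTranspose_apply, Matrix.mul_apply,
      Fin.sum_univ_two, Matrix.one_apply, Matrix.smul_apply]

/-! ### `diracD` as a subalgebra -/

noncomputable def diracSubalg : Subalgebra ℝ M4 where
  carrier := diracD
  add_mem' := by
    rintro a b ⟨K, P, rfl⟩ ⟨K', P', rfl⟩
    exact ⟨K + K', P + P', by rw [fromBlocks_add, ddag_add, ddag_add]⟩
  mul_mem' := by
    rintro a b ⟨K, P, rfl⟩ ⟨K', P', rfl⟩
    refine ⟨K * K' + P * ddag P', K * P' + P * ddag K', ?_⟩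
    rw [fromBlocks_multiply]
    refine fromBlocks_inj.mpr ⟨rfl, rfl, ?_, ?_⟩ <;>
      simp [ddag_add, ddag_mul, ddag_ddag, add_comm]
  one_mem' := ⟨1, 0, by rw [ddag_one, ddag_zero, fromBlocks_one]⟩
  algebraMap_mem' := by
    intro r
    refine ⟨r • 1, 0, ?_⟩
    rw [Algebra.algebraMap_eq_smul_one, ddag_real_smul, ddag_one, ddag_zero,
      ← fromBlocks_one, fromBlocks_smul]
    simp

/-! ### The adjoin direction `D ⊆ adjoin` -/

noncomputable abbrev diracA : Subalgebra ℝ M4 :=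
  Algebra.adjoin ℝ {m : M4 | ∃ v : M2, v.IsHermitian ∧ m = diracGamma v}

lemma Oo_mem {v : M2} (hv : v.IsHermitian) : Oo v ∈ diracA := by
  have hγ : diracGamma v ∈ diracA :=
    Algebra.subset_adjoin ⟨v, hv, rfl⟩
  have key : ((Real.sqrt 2 : ℝ))⁻¹ • diracGamma v = Oo v := by
    have hne : (Real.sqrt 2 : ℝ) ≠ 0 := ne_of_gt (Real.sqrt_pos.mpr two_pos)
    rw [diracGamma, Oo, fromBlocks_smul]
    have hs : ∀ X : M2, (Real.sqrt 2 : ℝ)⁻¹ • ((Real.sqrt 2 : ℂ) • X) = X := by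
      intro X
      rw [← algebraMap_smul ℂ ((Real.sqrt 2 : ℝ)⁻¹), smul_smul]
      have : (algebraMap ℝ ℂ (Real.sqrt 2)⁻¹) * (Real.sqrt 2 : ℂ) = 1 := by
        rw [Complex.coe_algebraMap]
        norm_cast
        exact inv_mul_cancel₀ hne
      rw [this, one_smul]
    rw [hs, hs, smul_zero]
    congr 1
    · exact (congrArg Matrix.adjugate hv.eq).symm ▸ rfl
  rw [← key]
  exact Subalgebra.smul_mem _ hγ _

lemma Ee_mem (v : M2) : Ee v ∈ diracA := by
  have one_herm : (1 : M2).IsHermitian := isHermitian_one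
  have hEh : ∀ w : M2, w.IsHermitian → Ee w ∈ diracA := by
    intro w hw
    have : Oo w * Oo 1 = Ee w := by rw [Oo_mul, ddag_one, mul_one]
    rw [← this]
    exact mul_mem (Oo_mem hw) (Oo_mem one_herm)
  have hiI : Ee (Complex.I • (1 : M2)) ∈ diracA := by
    have h1 : Oo 1 * Oo s1 = Ee (ddag s1) := by rw [Oo_mul, one_mul]
    have h2 : Oo s2 * Oo s3 = Ee (s2 * ddag s3) := Oo_mul _ _
    have h3 : Ee (ddag s1) * Ee (s2 * ddag s3) = Ee (Complex.I • (1 : M2)) := by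
      rw [Ee_mul, key_prod]
    rw [← h3, ← h1, ← h2]
    exact mul_mem (mul_mem (Oo_mem one_herm) (Oo_mem s1_herm))
      (mul_mem (Oo_mem s2_herm) (Oo_mem s3_herm))
  have hEih : ∀ w : M2, w.IsHermitian → Ee (Complex.I • w) ∈ diracA := by
    intro w hw
    have : Ee (Complex.I • (1 : M2)) * Ee w = Ee (Complex.I • w) := by
      rw [Ee_mul, smul_mul_assoc, one_mul]
    rw [← this]
    exact mul_mem hiI (hEh w hw)
  have hherm1 : ((2⁻¹ : ℂ) • (v + vᴴ)).IsHermitian := by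
    unfold Matrix.IsHermitian
    rw [conjTranspose_smul, conjTranspose_add, conjTranspose_conjTranspose]
    rw [show star (2⁻¹ : ℂ) = (2⁻¹ : ℂ) by simp]
    rw [add_comm]
  have hherm2 : ((-(Complex.I) * 2⁻¹) • (v - vᴴ)).IsHermitian := by
    unfold Matrix.IsHermitian
    rw [conjTranspose_smul, conjTranspose_sub, conjTranspose_conjTranspose]
    rw [show star (-(Complex.I) * 2⁻¹ : ℂ) = (Complex.I * 2⁻¹ : ℂ) by simp [Complex.ext_iff]]
    match_scalars <;> ring
  have hdecomp : v = (2⁻¹ : ℂ) • (v + vᴴ) + Complex.I • ((-(Complex.I) * 2⁻¹) • (v - vᴴ)) := by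
    match_scalars <;> simp [Complex.ext_iff] <;> ring
  have hv2 : Ee v
      = Ee ((2⁻¹ : ℂ) • (v + vᴴ)) + Ee (Complex.I • ((-(Complex.I) * 2⁻¹) • (v - vᴴ))) := by
    rw [← Ee_add, ← hdecomp]
  rw [hv2]
  exact add_mem (hEh _ hherm1) (hEih _ hherm2)

lemma Oo_all_mem (v : M2) : Oo v ∈ diracA := by
  have : Ee v * Oo 1 = Oo v := by rw [Ee_mul_Oo, mul_one]
  rw [← this]
  exact mul_mem (Ee_mem v) (Oo_mem isHermitian_one)

lemma diracD_subset_adjoin : diracD ⊆ (diracA : Set M4) := by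
  rintro Φ ⟨K, P, rfl⟩
  have : fromBlocks K P (ddag P) (ddag K) = Ee K + Oo P := by
    rw [Ee, Oo, fromBlocks_add]; simp
  rw [this]
  exact add_mem (Ee_mem K) (Oo_all_mem P)

lemma gen_subset :
    {m : M4 | ∃ v : M2, v.IsHermitian ∧ m = diracGamma v} ⊆ (diracSubalg : Set M4) := by
  rintro m ⟨v, hv, rfl⟩
  refine ⟨0, (Real.sqrt 2 : ℂ) • v, ?_⟩
  rw [diracGamma, ddag_zero, ddag_smul, ddag, hv.eq,
    show star ((Real.sqrt 2 : ℝ) : ℂ) = ((Real.sqrt 2 : ℝ) : ℂ) by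
      simp [Complex.star_def, Complex.conj_ofReal]]

/-! ### Part 2: finrank -/

noncomputable def fL : (M2 × M2) →ₗ[ℝ] M4 where
  toFun p := fromBlocks p.1 p.2 (ddag p.2) (ddag p.1)
  map_add' p q := by simp [fromBlocks_add, ddag_add]
  map_smul' r p := by simp [fromBlocks_smul, ddag_real_smul]

lemma fL_inj : Function.Injective fL := by
  intro p q h
  have h11 := congrArg Matrix.toBlocks₁₁ h
  have h12 := congrArg Matrix.toBlocks₁₂ h
  simp only [fL, LinearMap.coe_mk, AddHom.coe_mk, toBlocks_fromBlocks₁₁,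
    toBlocks_fromBlocks₁₂] at h11 h12
  exact Prod.ext h11 h12

lemma span_eq_range : Submodule.span ℝ diracD = LinearMap.range fL := by
  apply le_antisymm
  · rw [Submodule.span_le]
    rintro Φ ⟨K, P, rfl⟩
    exact ⟨(K, P), rfl⟩
  · rintro Φ ⟨⟨K, P⟩, rfl⟩
    exact Submodule.subset_span ⟨K, P, rfl⟩

lemma finrank_span_diracD : Module.finrank ℝ ↥(Submodule.span ℝ diracD) = 16 := by
  rw [span_eq_range, LinearMap.finrank_range_of_inj fL_inj]
  have hM2 : Module.finrank ℝ M2 = 8 := by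
    rw [Module.finrank_matrix]
    simp [Complex.finrank_real_complex]
  rw [Module.finrank_prod, hM2]

/-! ### Part 3: unique decomposition -/

lemma dirac_decomp (Φ : M4) : ∃! dd : M4 × M4,
    dd.1 ∈ diracD ∧ dd.2 ∈ diracD ∧ Φ = dd.1 + Complex.I • dd.2 := by
  obtain ⟨K, P, Q, J, rfl⟩ : ∃ K P Q J : M2, Φ = fromBlocks K P Q J :=
    ⟨_, _, _, _, (fromBlocks_toBlocks Φ).symm⟩
  set K0 : M2 := (2⁻¹ : ℂ) • (K + ddag J) with hK0
  set P0 : M2 := (2⁻¹ : ℂ) • (P + ddag Q) with hP0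
  set K1 : M2 := (-(Complex.I) * 2⁻¹) • (K - ddag J) with hK1
  set P1 : M2 := (-(Complex.I) * 2⁻¹) • (P - ddag Q) with hP1
  have combine : ∀ A B A' B' C' D' : M2,
      fromBlocks A B (ddag B) (ddag A) + Complex.I • fromBlocks A' B' C' D'
        = fromBlocks (A + Complex.I • A') (B + Complex.I • B')
            (ddag B + Complex.I • C') (ddag A + Complex.I • D') := by
    intro A B A' B' C' D'
    rw [fromBlocks_smul, fromBlocks_add]
  have hdP0 : ddag P0 = (2⁻¹ : ℂ) • (ddag P + Q) := by
    rw [hP0, ddag_smul, ddag_add, ddag_ddag]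
    norm_num
  have hdK0 : ddag K0 = (2⁻¹ : ℂ) • (ddag K + J) := by
    rw [hK0, ddag_smul, ddag_add, ddag_ddag]
    norm_num
  have hdP1 : ddag P1 = (Complex.I * 2⁻¹) • (ddag P - Q) := by
    rw [hP1, ddag_smul, ddag_sub, ddag_ddag]
    congr 1
    simp [Complex.ext_iff]
  have hdK1 : ddag K1 = (Complex.I * 2⁻¹) • (ddag K - J) := by
    rw [hK1, ddag_smul, ddag_sub, ddag_ddag]
    congr 1
    simp [Complex.ext_iff]
  refine ⟨(fromBlocks K0 P0 (ddag P0) (ddag K0), fromBlocks K1 P1 (ddag P1) (ddag K1)),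
    ⟨⟨K0, P0, rfl⟩, ⟨K1, P1, rfl⟩, ?_⟩, ?_⟩
  · rw [combine]
    refine (fromBlocks_inj.mpr ⟨?_, ?_, ?_, ?_⟩)
    · rw [hK0, hK1]; match_scalars <;> simp [Complex.ext_iff] <;> ring
    · rw [hP0, hP1]; match_scalars <;> simp [Complex.ext_iff] <;> ring
    · rw [hdP0, hdP1]; match_scalars <;> simp [Complex.ext_iff] <;> ring
    · rw [hdK0, hdK1]; match_scalars <;> simp [Complex.ext_iff] <;> ring
  · rintro ⟨y1, y2⟩ ⟨⟨K0', P0', rfl⟩, ⟨K1', P1', rfl⟩, hΦ⟩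
    rw [combine] at hΦ
    obtain ⟨e1, e2, e3, e4⟩ := fromBlocks_inj.mp hΦ
    have hdJ : ddag J = K0' - Complex.I • K1' := by
      rw [e4, ddag_add, ddag_smul, ddag_ddag, ddag_ddag]
      simp [sub_eq_add_neg]
    have hdQ : ddag Q = P0' - Complex.I • P1' := by
      rw [e3, ddag_add, ddag_smul, ddag_ddag, ddag_ddag]
      simp [sub_eq_add_neg]
    have hK0' : K0 = K0' := by
      rw [hK0, e1, hdJ]; match_scalars <;> simp [Complex.ext_iff] <;> ring
    have hP0' : P0 = P0' := by
      rw [hP0, e2, hdQ]; match_scalars <;> simp [Complex.ext_iff] <;> ring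
    have hK1' : K1 = K1' := by
      rw [hK1, e1, hdJ]; match_scalars <;> simp [Complex.ext_iff] <;> ring
    have hP1' : P1 = P1' := by
      rw [hP1, e2, hdQ]; match_scalars <;> simp [Complex.ext_iff] <;> ring
    rw [Prod.ext_iff]
    refine ⟨?_, ?_⟩
    · simp only []
      rw [hK0', hP0']
    · simp only []
      rw [hK1', hP1']

/-- The ℝ-subalgebra of `M₄(ℂ)` generated by the `γ(v)` with `v` Hermitian equals
`D = { fromBlocks K P (P‡) (K‡) }`; moreover `D` is a 16-dimensional real subspace and
`M₄(ℂ) = D ⊕ i·D` as real vector spaces (every `Φ` decomposes uniquely as `d + i·d'`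
with `d, d' ∈ D`). -/
theorem dirac_algebra_characterization :
    ((Algebra.adjoin ℝ
        {m : M4 | ∃ v : M2, v.IsHermitian ∧ m = diracGamma v} : Subalgebra ℝ M4) : Set M4)
      = diracD
    ∧ Module.finrank ℝ ↥(Submodule.span ℝ diracD) = 16
    ∧ ∀ Φ : M4, ∃! dd : M4 × M4,
        dd.1 ∈ diracD ∧ dd.2 ∈ diracD ∧ Φ = dd.1 + Complex.I • dd.2 := by
  refine ⟨?_, finrank_span_diracD, dirac_decomp⟩
  apply Set.Subset.antisymm
  · exact fun x hx => Algebra.adjoin_le gen_subset hx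
  · exact diracD_subset_adjoin
end

section
/- For all K, P, Q, J ∈ M₂(ℂ), the adjugate of the 4×4 block matrix Φ := fromBlocks K P Q J is adj(Φ) = fromBlocks ( det J · adj K − adj Q · J · adj P ) ( det P · adj Q − adj K · P · adj J ) ( det Q · adj P − adj J · Q · adj K ) ( det K · adj J − adj P · K · adj Q ). In particular, if Φ is invertible then (det Φ) · Φ⁻¹ equals this block matrix. -/
/-!
For 2×2 matrices `X * adj X = det X • 1`, `X + adj X = tr X • 1` and `adj (adj X) = X`.
With these, block multiplication shows that `Φ = fromBlocks K P Q J` times the claimed block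
matrix `R` is `c • 1` with `c = det K det J + det P det Q - tr (K adj Q J adj P)`, and `c = det Φ`
by expanding the 4×4 determinant. Multiplying `Φ * R = det Φ • 1` by `adj Φ` on the left gives
`det Φ • adj Φ = det Φ • R`. For the generic matrix over `ℤ[xᵢⱼ]` the determinant is a nonzero
element of a domain, so `adj Φ = R` there, and the identity specializes to every commutative ring.
-/

open Matrix

namespace Matrix

theorem reindex_fromBlocks_fin_two {α : Type*} (K P Q J : Matrix (Fin 2) (Fin 2) α) :
    reindex finSumFinEquiv finSumFinEquiv (fromBlocks K P Q J)
      = !![K 0 0, K 0 1, P 0 0, P 0 1;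
           K 1 0, K 1 1, P 1 0, P 1 1;
           Q 0 0, Q 0 1, J 0 0, J 0 1;
           Q 1 0, Q 1 1, J 1 0, J 1 1] := by
  ext i j
  fin_cases i <;> fin_cases j <;> rfl

variable {R : Type*} [CommRing R]

theorem add_adjugate_fin_two (A : Matrix (Fin 2) (Fin 2) R) : A + A.adjugate = A.trace • 1 := by
  ext i j
  fin_cases i <;> fin_cases j <;> simp [adjugate_fin_two, trace_fin_two, add_comm]

theorem trace_adjugate_fin_two (A : Matrix (Fin 2) (Fin 2) R) : A.adjugate.trace = A.trace := by
  simp [adjugate_fin_two, trace_fin_two, add_comm]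

theorem adjugate_mul_adjugate_mul_mul_adjugate_fin_two (A B C D : Matrix (Fin 2) (Fin 2) R) :
    (A * B.adjugate * C * D.adjugate).adjugate = D * C.adjugate * B * A.adjugate := by
  simp [adjugate_mul_distrib, adjugate_adjugate', Matrix.mul_assoc]

theorem det_fromBlocks_fin_two (K P Q J : Matrix (Fin 2) (Fin 2) R) :
    (fromBlocks K P Q J).det
      = K.det * J.det + P.det * Q.det - trace (K * Q.adjugate * J * P.adjugate) := by
  rw [← det_reindex_self finSumFinEquiv, reindex_fromBlocks_fin_two]
  simp [det_succ_row_zero, Fin.sum_univ_succ, Fin.succAbove, adjugate_fin_two, trace_fin_two,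
    mul_apply]
  ring

def twoSpinorAdjugate (K P Q J : Matrix (Fin 2) (Fin 2) R) :
    Matrix (Fin 2 ⊕ Fin 2) (Fin 2 ⊕ Fin 2) R :=
  fromBlocks
    (J.det • K.adjugate - Q.adjugate * J * P.adjugate)
    (P.det • Q.adjugate - K.adjugate * P * J.adjugate)
    (Q.det • P.adjugate - J.adjugate * Q * K.adjugate)
    (K.det • J.adjugate - P.adjugate * K * Q.adjugate)

theorem fromBlocks_mul_twoSpinorAdjugate (K P Q J : Matrix (Fin 2) (Fin 2) R) :
    fromBlocks K P Q J * twoSpinorAdjugate K P Q J = (fromBlocks K P Q J).det • 1 := by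
  have hdiag₁ := add_adjugate_fin_two (K * Q.adjugate * J * P.adjugate)
  have hdiag₂ := add_adjugate_fin_two (Q * K.adjugate * P * J.adjugate)
  rw [adjugate_mul_adjugate_mul_mul_adjugate_fin_two] at hdiag₁ hdiag₂
  have htrace : trace (Q * K.adjugate * P * J.adjugate)
      = trace (K * Q.adjugate * J * P.adjugate) := by
    rw [← trace_adjugate_fin_two, adjugate_mul_adjugate_mul_mul_adjugate_fin_two]
    simpa only [Matrix.mul_assoc] using trace_mul_comm (J * P.adjugate) (K * Q.adjugate)
  rw [det_fromBlocks_fin_two, twoSpinorAdjugate, fromBlocks_multiply, ← fromBlocks_one,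
    fromBlocks_smul, smul_zero]
  simp only [Matrix.mul_sub, Matrix.mul_smul, ← Matrix.mul_assoc, mul_adjugate, Matrix.smul_mul,
    Matrix.one_mul]
  congr 1
  · rw [sub_smul, ← hdiag₁]; module
  · module
  · module
  · rw [sub_smul, ← htrace, ← hdiag₂]; module

theorem map_twoSpinorAdjugate {S : Type*} [CommRing S] (f : R →+* S)
    (K P Q J : Matrix (Fin 2) (Fin 2) R) :
    (twoSpinorAdjugate K P Q J).map f
      = twoSpinorAdjugate (K.map f) (P.map f) (Q.map f) (J.map f) := by
  have hadj (A : Matrix (Fin 2) (Fin 2) R) : A.adjugate.map f = (A.map f).adjugate :=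
    f.map_adjugate A
  have hdet (A : Matrix (Fin 2) (Fin 2) R) : f A.det = (A.map f).det := f.map_det A
  simp only [twoSpinorAdjugate, fromBlocks_map, Matrix.map_sub f (map_sub f), Matrix.map_mul,
    Matrix.map_smul' f _ _ (map_mul f), hadj, hdet]

theorem adjugate_fromBlocks_fin_two_of_det_ne_zero [IsDomain R]
    (K P Q J : Matrix (Fin 2) (Fin 2) R) (h : (fromBlocks K P Q J).det ≠ 0) :
    (fromBlocks K P Q J).adjugate = twoSpinorAdjugate K P Q J := by
  set Φ := fromBlocks K P Q J
  apply smul_right_injective _ h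
  calc Φ.det • Φ.adjugate = Φ.adjugate * (Φ * twoSpinorAdjugate K P Q J) := by
        rw [fromBlocks_mul_twoSpinorAdjugate, Matrix.mul_smul, Matrix.mul_one]
    _ = Φ.det • twoSpinorAdjugate K P Q J := by
        rw [← Matrix.mul_assoc, adjugate_mul, Matrix.smul_mul, Matrix.one_mul]

theorem adjugate_eq_twoSpinorAdjugate_toBlocks (Φ : Matrix (Fin 2 ⊕ Fin 2) (Fin 2 ⊕ Fin 2) R) :
    Φ.adjugate = twoSpinorAdjugate Φ.toBlocks₁₁ Φ.toBlocks₁₂ Φ.toBlocks₂₁ Φ.toBlocks₂₂ := by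
  let Φ₀ := mvPolynomialX (Fin 2 ⊕ Fin 2) (Fin 2 ⊕ Fin 2) ℤ
  have hΦ₀ : Φ₀.adjugate
      = twoSpinorAdjugate Φ₀.toBlocks₁₁ Φ₀.toBlocks₁₂ Φ₀.toBlocks₂₁ Φ₀.toBlocks₂₂ := by
    have hdet : (fromBlocks Φ₀.toBlocks₁₁ Φ₀.toBlocks₁₂ Φ₀.toBlocks₂₁ Φ₀.toBlocks₂₂).det ≠ 0 := by
      rw [fromBlocks_toBlocks]
      exact det_mvPolynomialX_ne_zero _ ℤ
    simpa only [fromBlocks_toBlocks] using adjugate_fromBlocks_fin_two_of_det_ne_zero _ _ _ _ hdet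
  rw [← mvPolynomialX_mapMatrix_aeval ℤ Φ, ← AlgHom.map_adjugate, hΦ₀]
  exact map_twoSpinorAdjugate _ _ _ _ _

theorem adjugate_fromBlocks_fin_two (K P Q J : Matrix (Fin 2) (Fin 2) R) :
    (fromBlocks K P Q J).adjugate = twoSpinorAdjugate K P Q J := by
  simpa using adjugate_eq_twoSpinorAdjugate_toBlocks (fromBlocks K P Q J)

end Matrix

/-- Two-spinor block formula for the adjugate (and hence the inverse) of an endomorphism
`Φ = fromBlocks K P Q J` of 4-spinor space. If `Φ` is invertible then `(det Φ)·Φ⁻¹`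
equals the same block matrix. -/
theorem adjugate_fromBlocks_two_spinor (K P Q J : M2) :
    (fromBlocks K P Q J).adjugate
      = fromBlocks
          (J.det • K.adjugate - Q.adjugate * J * P.adjugate)
          (P.det • Q.adjugate - K.adjugate * P * J.adjugate)
          (Q.det • P.adjugate - J.adjugate * Q * K.adjugate)
          (K.det • J.adjugate - P.adjugate * K * Q.adjugate)
    ∧ (IsUnit (fromBlocks K P Q J).det →
        (fromBlocks K P Q J).det • (fromBlocks K P Q J)⁻¹
          = fromBlocks
              (J.det • K.adjugate - Q.adjugate * J * P.adjugate)
              (P.det • Q.adjugate - K.adjugate * P * J.adjugate)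
              (Q.det • P.adjugate - J.adjugate * Q * K.adjugate)
              (K.det • J.adjugate - P.adjugate * K * Q.adjugate)) := by
  have hadj := adjugate_fromBlocks_fin_two K P Q J
  refine ⟨hadj, fun h => ?_⟩
  rw [inv_def, smul_smul, Ring.mul_inverse_cancel _ h, one_smul, hadj, twoSpinorAdjugate]
end

section
/- Let K, P ∈ M₂(ℂ) and Φ := fromBlocks K P (P‡) (K‡) ∈ M₄(ℂ) with det Φ ≠ 0, and suppose that for every Hermitian v ∈ M₂(ℂ) there exists a Hermitian w ∈ M₂(ℂ) with Φ·γ(v) = γ(w)·Φ (i.e. Φ belongs to the Clifford group: its adjoint action stabilizes γ(H)). Then K = 0 or P = 0; that is, every element of the Clifford group is either even (block-diagonal) or odd (block-antidiagonal). -/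
open Matrix

lemma adj_ddag (K : M2) : (ddag K).adjugate = Kᴴ := by
  rw [ddag, Matrix.adjugate_adjugate _ (by simp)]
  simp

lemma det_ddag (K : M2) : (ddag K).det = star K.det := by
  rw [ddag, Matrix.det_adjugate, Matrix.det_conjTranspose]
  simp

/-- Every element `Φ = fromBlocks K P (P‡) (K‡)` of the Clifford group (an invertible
element of the Dirac algebra whose adjoint action stabilizes `γ(H)`) is either even
(block-diagonal, `P = 0`) or odd (block-antidiagonal, `K = 0`). -/

theorem clifford_group_even_or_odd (K P : M2)
    (hdet : (fromBlocks K P (ddag P) (ddag K)).det ≠ 0)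
    (hcl : ∀ v : M2, v.IsHermitian → ∃ w : M2, w.IsHermitian ∧
      fromBlocks K P (ddag P) (ddag K) * diracGamma v
        = diracGamma w * fromBlocks K P (ddag P) (ddag K)) :
    K = 0 ∨ P = 0 := by
  have hc : ((Real.sqrt 2 : ℝ) : ℂ) ≠ 0 := by
    exact_mod_cast Complex.ofReal_ne_zero.mpr (by positivity)
  -- Step 1: scalar-free block equations
  have key : ∀ v : M2, v.IsHermitian → ∃ w : M2, w.IsHermitian ∧
      K * v * Kᴴ = star K.det • w ∧
      P * v.adjugate * Pᴴ = star P.det • w := by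
    intro v hv
    obtain ⟨w, hw, heq⟩ := hcl v hv
    rw [diracGamma, diracGamma, fromBlocks_multiply, fromBlocks_multiply] at heq
    simp only [Matrix.mul_zero, Matrix.zero_mul, add_zero, zero_add,
      Matrix.mul_smul, Matrix.smul_mul] at heq
    have h12 := congrArg Matrix.toBlocks₁₂ heq
    have h11 := congrArg Matrix.toBlocks₁₁ heq
    simp only [Matrix.toBlocks_fromBlocks₁₂, Matrix.toBlocks_fromBlocks₁₁] at h12 h11
    have e2 : K * v = w * ddag K := smul_right_injective _ hc h12
    have e1 : P * v.adjugate = w * ddag P := smul_right_injective _ hc h11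
    refine ⟨w, hw, ?_, ?_⟩
    · calc K * v * Kᴴ = w * ddag K * (ddag K).adjugate := by rw [e2, adj_ddag]
        _ = w * ((ddag K) * (ddag K).adjugate) := by rw [mul_assoc]
        _ = star K.det • w := by rw [Matrix.mul_adjugate, det_ddag, Matrix.mul_smul, mul_one]
    · calc P * v.adjugate * Pᴴ = w * ddag P * (ddag P).adjugate := by rw [e1, adj_ddag]
        _ = w * ((ddag P) * (ddag P).adjugate) := by rw [mul_assoc]
        _ = star P.det • w := by rw [Matrix.mul_adjugate, det_ddag, Matrix.mul_smul, mul_one]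
  by_cases hK : K.det = 0
  · left
    obtain ⟨w, hw, h2, h1⟩ := key 1 Matrix.isHermitian_one
    rw [mul_one, hK, star_zero, zero_smul] at h2
    open ComplexOrder in
    exact Matrix.self_mul_conjTranspose_eq_zero.mp h2
  by_cases hP : P.det = 0
  · right
    obtain ⟨w, hw, h2, h1⟩ := key 1 Matrix.isHermitian_one
    rw [Matrix.adjugate_one, mul_one, hP, star_zero, zero_smul] at h1
    open ComplexOrder in
    exact Matrix.self_mul_conjTranspose_eq_zero.mp h1
  exfalso
  set R : M2 := K.adjugate * P with hRdef
  set μ : ℂ := K.det * star P.det with hμdef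
  have hμ : μ ≠ 0 := mul_ne_zero hK (star_ne_zero.mpr hP)
  have hR : ∀ v : M2, v.IsHermitian → R * v.adjugate * Rᴴ = μ • v := by
    intro v hv
    obtain ⟨w, hw, h2, h1⟩ := key v hv
    have hKw : K.adjugate * w * (Kᴴ).adjugate = K.det • v := by
      have c1 : K.adjugate * (K * v * Kᴴ) * (Kᴴ).adjugate
          = (K.det * star K.det) • v := by
        calc K.adjugate * (K * v * Kᴴ) * (Kᴴ).adjugate
            = (K.adjugate * K) * (v * (Kᴴ * (Kᴴ).adjugate)) := by
              simp only [mul_assoc]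
          _ = (K.det • 1) * (v * (star K.det • 1)) := by
              rw [Matrix.adjugate_mul, Matrix.mul_adjugate, Matrix.det_conjTranspose]
          _ = (K.det * star K.det) • v := by
              rw [Matrix.mul_smul, mul_one, Matrix.smul_mul, one_mul, smul_smul]
      have c2 : K.adjugate * (K * v * Kᴴ) * (Kᴴ).adjugate
          = star K.det • (K.adjugate * w * (Kᴴ).adjugate) := by
        rw [h2, Matrix.mul_smul, Matrix.smul_mul]
      have : star K.det • (K.adjugate * w * (Kᴴ).adjugate)
          = star K.det • (K.det • v) := by
        rw [← c2, c1, smul_smul, mul_comm]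
      exact smul_right_injective _ (by simpa using hK) this
    calc R * v.adjugate * Rᴴ
        = K.adjugate * (P * v.adjugate * Pᴴ) * (Kᴴ).adjugate := by
          rw [hRdef, Matrix.conjTranspose_mul, Matrix.adjugate_conjTranspose]
          simp only [mul_assoc]
      _ = star P.det • (K.adjugate * w * (Kᴴ).adjugate) := by
          rw [h1, Matrix.mul_smul, Matrix.smul_mul]
      _ = μ • v := by rw [hKw, smul_smul, hμdef, mul_comm]
  have h1 : R * Rᴴ = μ • 1 := by
    simpa [Matrix.adjugate_one] using hR 1 Matrix.isHermitian_one
  have hdetR : R.det ≠ 0 := by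
    have hd := congrArg Matrix.det h1
    rw [Matrix.det_mul, Matrix.det_conjTranspose, Matrix.det_smul, Matrix.det_one] at hd
    intro h0
    rw [h0, zero_mul] at hd
    simp only [mul_one] at hd
    exact hμ (by
      have := hd.symm
      exact pow_eq_zero_iff (by norm_num) |>.mp this)
  have h2 : Rᴴ * R = μ • 1 := by
    have e : R.det • Rᴴ = μ • R.adjugate := by
      have := congrArg (fun X => R.adjugate * X) h1
      simpa only [← mul_assoc, Matrix.adjugate_mul, Matrix.smul_mul, Matrix.mul_smul,
        one_mul, mul_one] using this
    have e2 : R.det • (Rᴴ * R) = R.det • (μ • (1 : M2)) := by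
      calc R.det • (Rᴴ * R) = (R.det • Rᴴ) * R := by rw [Matrix.smul_mul]
        _ = (μ • R.adjugate) * R := by rw [e]
        _ = μ • (R.adjugate * R) := by rw [Matrix.smul_mul]
        _ = μ • (R.det • (1 : M2)) := by rw [Matrix.adjugate_mul]
        _ = R.det • (μ • (1 : M2)) := smul_comm _ _ _
    exact smul_right_injective _ hdetR e2
  have hanti : ∀ v : M2, v.IsHermitian → v.adjugate = -v → R * v = -(v * R) := by
    intro v hv hadj
    have h := hR v hv
    rw [hadj] at h
    have h' : R * -v * (Rᴴ * R) = (μ • v) * R := by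
      rw [← mul_assoc, h]
    rw [h2, Matrix.mul_smul, mul_one, Matrix.smul_mul] at h'
    have : μ • (R * v) = μ • (-(v * R)) := by
      rw [smul_neg, ← h']
      simp [mul_neg, smul_neg]
    exact smul_right_injective _ hμ this
  -- Pauli matrices
  set s1 : M2 := !![0, 1; 1, 0] with hs1def
  set s2 : M2 := !![0, -Complex.I; Complex.I, 0] with hs2def
  set s3 : M2 := !![1, 0; 0, -1] with hs3def
  have hs1 : s1.IsHermitian := by
    rw [Matrix.IsHermitian]
    ext i j
    fin_cases i <;> fin_cases j <;> simp [hs1def, Matrix.conjTranspose_apply]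
  have hs2 : s2.IsHermitian := by
    rw [Matrix.IsHermitian]
    ext i j
    fin_cases i <;> fin_cases j <;>
      simp [hs2def, Matrix.conjTranspose_apply, Complex.conj_I]
  have hs3 : s3.IsHermitian := by
    rw [Matrix.IsHermitian]
    ext i j
    fin_cases i <;> fin_cases j <;> simp [hs3def, Matrix.conjTranspose_apply]
  have ha1 : s1.adjugate = -s1 := by
    rw [hs1def, Matrix.adjugate_fin_two_of]
    ext i j
    fin_cases i <;> fin_cases j <;> simp
  have ha2 : s2.adjugate = -s2 := by
    rw [hs2def, Matrix.adjugate_fin_two_of]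
    ext i j
    fin_cases i <;> fin_cases j <;> simp
  have ha3 : s3.adjugate = -s3 := by
    rw [hs3def, Matrix.adjugate_fin_two_of]
    ext i j
    fin_cases i <;> fin_cases j <;> simp
  have c1 := hanti s1 hs1 ha1
  have c2 := hanti s2 hs2 ha2
  have c3 := hanti s3 hs3 ha3
  -- extract entries
  have e3a := Matrix.ext_iff.mpr c3 0 0
  have e3b := Matrix.ext_iff.mpr c3 1 1
  have e1a := Matrix.ext_iff.mpr c1 0 0
  have e2a := Matrix.ext_iff.mpr c2 0 0
  simp [Matrix.mul_apply, Matrix.vecMul, dotProduct, Fin.sum_univ_two, hs1def, hs2def, hs3def] at e3a e3b e1a e2a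
  have r00 : R 0 0 = 0 := by linear_combination e3a / 2
  have r11 : R 1 1 = 0 := by linear_combination -e3b / 2
  have r01' : R 0 1 = R 1 0 := by
    rw [mul_comm] at e2a
    exact mul_left_cancel₀ Complex.I_ne_zero e2a
  have r10 : R 1 0 = 0 := by linear_combination (e1a - r01') / 2
  have r01 : R 0 1 = 0 := r01'.trans r10
  have hR0 : R = 0 := by
    ext i j
    fin_cases i <;> fin_cases j <;> simp [r00, r11, r10, r01]
  rw [hR0, Matrix.zero_mul] at h1
  have hfin := Matrix.ext_iff.mpr h1 0 0
  simp at hfin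
  exact hμ hfin.symm
end

section
/- (a) Let K ∈ M₂(ℂ) with det K ≠ 0 and Φ := fromBlocks K 0 0 (K‡). Then for every Hermitian v ∈ M₂(ℂ) there exists a Hermitian w with Φ·γ(v) = γ(w)·Φ if and only if det K is real. (b) Let P ∈ M₂(ℂ) with det P ≠ 0 and Φ := fromBlocks 0 P (P‡) 0. Then for every Hermitian v ∈ M₂(ℂ) there exists a Hermitian w with Φ·γ(v) = γ(w)·Φ if and only if det P is real. (Thus the even and odd parts of the Clifford group are exactly the invertible block matrices of these two forms with real nonzero determinant of the block.) -/
open Matrix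

/-!
Comparing blocks, `Φ γ(v) = γ(w) Φ` amounts to `K v = w K‡` and `K‡ adj v = adj w K` in the even
case, and to the same equations with `v` replaced by `adj v` in the odd case. Taking `v = 1` gives
`K Kᴴ = conj (det K) • w` with `K Kᴴ` and `w ≠ 0` Hermitian, which forces `det K` to be real.
Conversely, for real `det K` the Hermitian matrix `w = (det K)⁻¹ • K v Kᴴ` solves both equations,
because `Kᴴ adj(Kᴴ) = conj (det K) = det K` and, for `2 × 2` matrices, `adj (c • X) = c • adj X`
and `adj (adj v) = v`.
-/

lemma Matrix.IsHermitian.star_eq_of_isHermitian_smul {n α : Type*} [Field α] [StarRing α]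
    {w : Matrix n n α} {c : α} (hw : w.IsHermitian) (hw0 : w ≠ 0)
    (hcw : (c • w).IsHermitian) : star c = c := by
  have h : (star c - c) • w = 0 := by
    rw [sub_smul, sub_eq_zero, ← hw.eq, ← conjTranspose_smul, hw.eq, hcw.eq]
  exact sub_eq_zero.mp ((smul_eq_zero.mp h).resolve_right hw0)

lemma det_im_eq_zero_of_eq_mul_ddag {K w : M2} (hK : K.det ≠ 0) (hw : w.IsHermitian)
    (h : K = w * ddag K) : K.det.im = 0 := by
  have hKK : K * Kᴴ = star K.det • w :=
    calc K * Kᴴ = w * (ddag K * Kᴴ) := by rw [← Matrix.mul_assoc, ← h]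
      _ = star K.det • w := by
        rw [ddag, adjugate_mul, det_conjTranspose, Matrix.mul_smul, Matrix.mul_one]
  have hw0 : w ≠ 0 := by
    rintro rfl
    rw [Matrix.zero_mul] at h
    exact hK (by rw [h, det_zero])
  have hstar := hw.star_eq_of_isHermitian_smul hw0 (hKK ▸ isHermitian_mul_conjTranspose_self K)
  rw [star_star] at hstar
  exact Complex.conj_eq_iff_im.mp hstar.symm

lemma exists_isHermitian_intertwining {K X : M2} (hK : K.det ≠ 0) (hreal : K.det.im = 0)
    (hX : X.IsHermitian) :
    ∃ w : M2, w.IsHermitian ∧ K * X = w * ddag K ∧ ddag K * X.adjugate = w.adjugate * K := by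
  have hstar : star K.det = K.det := Complex.conj_eq_iff_im.mpr hreal
  refine ⟨K.det⁻¹ • (K * X * Kᴴ), ?_, ?_, ?_⟩
  · rw [IsHermitian, conjTranspose_smul, (isHermitian_mul_mul_conjTranspose K hX).eq, star_inv₀,
      hstar]
  · rw [ddag, Matrix.smul_mul, Matrix.mul_assoc, mul_adjugate, det_conjTranspose, hstar,
      Matrix.mul_smul, Matrix.mul_one, smul_smul, inv_mul_cancel₀ hK, one_smul]
  · rw [adjugate_smul, Fintype.card_fin, pow_one, adjugate_mul_distrib, adjugate_mul_distrib,
      Matrix.smul_mul, Matrix.mul_assoc, Matrix.mul_assoc, adjugate_mul, Matrix.mul_smul,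
      Matrix.mul_one, Matrix.mul_smul, smul_smul, inv_mul_cancel₀ hK, one_smul, ddag]

lemma fromBlocks_diag_mul_diracGamma_eq_iff (K v w : M2) :
    fromBlocks K 0 0 (ddag K) * diracGamma v = diracGamma w * fromBlocks K 0 0 (ddag K) ↔
      K * v = w * ddag K ∧ ddag K * v.adjugate = w.adjugate * K := by
  simp [diracGamma, fromBlocks_multiply, fromBlocks_inj]

lemma fromBlocks_antidiag_mul_diracGamma_eq_iff (P v w : M2) :
    fromBlocks 0 P (ddag P) 0 * diracGamma v = diracGamma w * fromBlocks 0 P (ddag P) 0 ↔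
      P * v.adjugate = w * ddag P ∧ ddag P * v = w.adjugate * P := by
  simp [diracGamma, fromBlocks_multiply, fromBlocks_inj]

/-- Characterization of the even and odd parts of the Clifford group:
(a) for `K` with `det K ≠ 0`, the block-diagonal `Φ = fromBlocks K 0 0 (K‡)`
has adjoint action stabilizing `γ(H)` iff `det K` is real;
(b) for `P` with `det P ≠ 0`, the block-antidiagonal `Φ = fromBlocks 0 P (P‡) 0`
has adjoint action stabilizing `γ(H)` iff `det P` is real. -/
theorem clifford_group_even_odd_characterization :
    (∀ K : M2, K.det ≠ 0 →
      ((∀ v : M2, v.IsHermitian → ∃ w : M2, w.IsHermitian ∧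
          fromBlocks K 0 0 (ddag K) * diracGamma v
            = diracGamma w * fromBlocks K 0 0 (ddag K))
        ↔ (K.det).im = 0)) ∧
    (∀ P : M2, P.det ≠ 0 →
      ((∀ v : M2, v.IsHermitian → ∃ w : M2, w.IsHermitian ∧
          fromBlocks 0 P (ddag P) 0 * diracGamma v
            = diracGamma w * fromBlocks 0 P (ddag P) 0)
        ↔ (P.det).im = 0)) := by
  refine ⟨fun K hK => ⟨fun h => ?_, fun hreal v hv => ?_⟩,
    fun P hP => ⟨fun h => ?_, fun hreal v hv => ?_⟩⟩
  · obtain ⟨w, hw, hKw⟩ := h 1 isHermitian_one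
    rw [fromBlocks_diag_mul_diracGamma_eq_iff, Matrix.mul_one] at hKw
    exact det_im_eq_zero_of_eq_mul_ddag hK hw hKw.1
  · obtain ⟨w, hw, hKw⟩ := exists_isHermitian_intertwining hK hreal hv
    exact ⟨w, hw, (fromBlocks_diag_mul_diracGamma_eq_iff K v w).mpr hKw⟩
  · obtain ⟨w, hw, hPw⟩ := h 1 isHermitian_one
    rw [fromBlocks_antidiag_mul_diracGamma_eq_iff, adjugate_one, Matrix.mul_one] at hPw
    exact det_im_eq_zero_of_eq_mul_ddag hP hw hPw.1
  · obtain ⟨w, hw, hPw⟩ := exists_isHermitian_intertwining hP hreal hv.adjugate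
    rw [adjugate_adjugate' v, Fintype.card_fin, pow_zero, one_smul] at hPw
    exact ⟨w, hw, (fromBlocks_antidiag_mul_diracGamma_eq_iff P v w).mpr hPw⟩
end

section
/- Every matrix K ∈ M₂(ℂ) whose determinant is real can be written as a product K = V₁·V₂·V₃ of three Hermitian matrices V₁, V₂, V₃ ∈ M₂(ℂ). -/
open Matrix

open ComplexConjugate

lemma conjT2 (w x y z : ℂ) :
    (!![w, x; y, z] : M2)ᴴ = !![conj w, conj y; conj x, conj z] := by
  ext i j
  fin_cases i <;> fin_cases j <;> rfl

lemma isHerm2 {w x y z : ℂ} (hw : conj w = w) (hxy : conj x = y) (hz : conj z = z) :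
    (!![w, x; y, z] : M2).IsHermitian := by
  unfold Matrix.IsHermitian
  rw [conjT2, hw, hxy, ← hxy, Complex.conj_conj, hz]

lemma step1 (K : M2) :
    ∃ W : M2, W.IsHermitian ∧ IsUnit W.det ∧ conj W.det = W.det ∧
      conj (W * K).trace = (W * K).trace := by
  rw [Matrix.eta_fin_two K]
  set a := K 0 0; set b := K 0 1; set c := K 1 0; set d := K 1 1
  by_cases hw : c - conj b = 0
  · -- c = conj b : take σx
    have hw' : c = conj b := by linear_combination hw
    refine ⟨!![0, 1; 1, 0], isHerm2 (by simp) (by simp) (by simp), ?_, ?_, ?_⟩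
    · rw [isUnit_iff_ne_zero, Matrix.det_fin_two_of]
      norm_num
    · rw [Matrix.det_fin_two_of]
      simp
    · rw [Matrix.mul_fin_two, Matrix.trace_fin_two_of]
      simp only [map_add, _root_.map_mul, _root_.map_zero, _root_.map_one, Complex.conj_conj]
      rw [hw']
      simp only [Complex.conj_conj]
      ring
  · by_cases ha : conj a = a
    · by_cases hd : conj d = d
      · exact ⟨1, Matrix.isHermitian_one, by simp, by simp, by
          simp [Matrix.trace_fin_two_of, _root_.map_add, ha, hd]⟩
      · refine ⟨!![0, (conj d - d) * conj (c - conj b);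
            (d - conj d) * (c - conj b), 2 * ((c - conj b) * conj (c - conj b))], ?_, ?_, ?_, ?_⟩
        · refine isHerm2 (by simp) (by simp only [_root_.map_mul, map_sub, Complex.conj_conj]) ?_
          simp only [_root_.map_mul, map_sub, Complex.conj_conj, map_ofNat]
          ring
        · rw [isUnit_iff_ne_zero]
          have : (!![(0:ℂ), (conj d - d) * conj (c - conj b);
              (d - conj d) * (c - conj b), 2 * ((c - conj b) * conj (c - conj b))] : M2).det
              = (d - conj d)^2 * ((c - conj b) * conj (c - conj b)) := by
            rw [Matrix.det_fin_two_of]; ring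
          rw [this]
          have h1 : d - conj d ≠ 0 := fun h => hd (by linear_combination -h)
          have h2 : conj (c - conj b) ≠ 0 := fun h => hw (by
            have := congrArg conj h
            simpa using this)
          exact mul_ne_zero (pow_ne_zero 2 h1) (mul_ne_zero hw h2)
        · rw [Matrix.det_fin_two_of]
          simp only [_root_.map_mul, map_sub, _root_.map_add, map_neg, _root_.map_zero, Complex.conj_conj, map_ofNat]
          ring
        · rw [Matrix.mul_fin_two, Matrix.trace_fin_two_of]
          simp only [_root_.map_mul, map_sub, _root_.map_add, _root_.map_zero, Complex.conj_conj, map_ofNat]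
          ring
    · refine ⟨!![2 * ((c - conj b) * conj (c - conj b)), (conj a - a) * conj (c - conj b);
          (a - conj a) * (c - conj b), 0], ?_, ?_, ?_, ?_⟩
      · refine isHerm2 ?_ (by simp only [_root_.map_mul, map_sub, Complex.conj_conj]) (by simp)
        simp only [_root_.map_mul, map_sub, Complex.conj_conj, map_ofNat]
        ring
      · rw [isUnit_iff_ne_zero]
        have : (!![2 * ((c - conj b) * conj (c - conj b)), (conj a - a) * conj (c - conj b);
            (a - conj a) * (c - conj b), 0] : M2).det
            = (a - conj a)^2 * ((c - conj b) * conj (c - conj b)) := by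
          rw [Matrix.det_fin_two_of]; ring
        rw [this]
        have h1 : a - conj a ≠ 0 := fun h => ha (by linear_combination -h)
        have h2 : conj (c - conj b) ≠ 0 := fun h => hw (by
          have := congrArg conj h
          simpa using this)
        exact mul_ne_zero (pow_ne_zero 2 h1) (mul_ne_zero hw h2)
      · rw [Matrix.det_fin_two_of]
        simp only [_root_.map_mul, map_sub, _root_.map_add, map_neg, _root_.map_zero, Complex.conj_conj, map_ofNat]
        ring
      · rw [Matrix.mul_fin_two, Matrix.trace_fin_two_of]
        simp only [_root_.map_mul, map_sub, _root_.map_add, _root_.map_zero, Complex.conj_conj, map_ofNat]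
        ring

lemma conj_ne_zero {z : ℂ} (h : z ≠ 0) : conj z ≠ 0 := by
  intro h0
  exact h (by simpa using congrArg conj h0)

lemma step2' (a b c d : ℂ)
    (hT : conj a + conj d = a + d)
    (hD : conj a * conj d - conj b * conj c = a * d - b * c) :
    ∃ S : M2, S.IsHermitian ∧ IsUnit S.det ∧ ((!![a, b; c, d] : M2) * S).IsHermitian := by
  by_cases hρ : a - conj d = 0
  · -- d = conj a
    have h1 : conj d = a := by linear_combination -hρ
    have h2 : conj a = d := by
      have := congrArg conj h1
      simpa using this.symm
    have hbc : conj b * conj c = b * c := by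
      linear_combination -hD + conj a * h1 + a * h2
    by_cases hb : b = 0
    · subst hb
      by_cases hc : c = 0
      · subst hc
        refine ⟨!![0, 1; 1, 0], isHerm2 (by simp) (by simp) (by simp), ?_, ?_⟩
        · rw [isUnit_iff_ne_zero, Matrix.det_fin_two_of]; norm_num
        · rw [Matrix.mul_fin_two]
          refine isHerm2 (by simp) ?_ (by simp)
          simp only [_root_.map_add, _root_.map_mul, _root_.map_zero, _root_.map_one]
          linear_combination h2
      · refine ⟨!![0, conj c; c, 0], isHerm2 (by simp) (by simp) (by simp), ?_, ?_⟩
        · rw [isUnit_iff_ne_zero, Matrix.det_fin_two_of]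
          simpa using fun h => absurd h hc
        · rw [Matrix.mul_fin_two]
          refine isHerm2 (by simp) ?_ ?_
          · simp only [_root_.map_add, _root_.map_mul, _root_.map_zero, Complex.conj_conj]
            linear_combination c * h2
          · simp only [_root_.map_add, _root_.map_mul, _root_.map_zero, Complex.conj_conj]
            ring
    · refine ⟨!![0, b; conj b, 0], isHerm2 (by simp) rfl (by simp), ?_, ?_⟩
      · rw [isUnit_iff_ne_zero, Matrix.det_fin_two_of]
        simpa using fun h => absurd h hb
      · rw [Matrix.mul_fin_two]
        refine isHerm2 ?_ ?_ ?_
        · simp only [_root_.map_add, _root_.map_mul, _root_.map_zero, Complex.conj_conj]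
          ring
        · simp only [_root_.map_add, _root_.map_mul, _root_.map_zero, Complex.conj_conj]
          linear_combination conj b * h2
        · simp only [_root_.map_add, _root_.map_mul, _root_.map_zero, Complex.conj_conj]
          linear_combination hbc
  · have hρ' : conj (a - conj d) = a - conj d := by
      simp only [_root_.map_sub, Complex.conj_conj]
      linear_combination hT
    by_cases hc : c = 0
    · subst hc
      by_cases hb : b = 0
      · subst hb
        have key : (a - conj d) * (d - conj d) = 0 := by
          simp only [_root_.map_zero] at hD
          linear_combination conj d * hT - hD
        have hd' : conj d = d := by
          rcases mul_eq_zero.mp key with h | h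
          · exact absurd h hρ
          · linear_combination -h
        have ha : conj a = a := by linear_combination hT - hd'
        refine ⟨1, Matrix.isHermitian_one, by simp, ?_⟩
        rw [mul_one]
        exact isHerm2 ha (by simp) hd'
      · refine ⟨!![0, -b; -conj b, a - conj d],
          isHerm2 (by simp) (by simp only [map_neg]) hρ', ?_, ?_⟩
        · rw [isUnit_iff_ne_zero, Matrix.det_fin_two_of]
          simpa using fun h => absurd h hb
        · rw [Matrix.mul_fin_two]
          refine isHerm2 ?_ ?_ ?_
          · simp only [_root_.map_add, _root_.map_mul, _root_.map_zero, map_neg,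
              _root_.map_sub, Complex.conj_conj]
            ring
          · simp only [_root_.map_add, _root_.map_mul, _root_.map_zero, map_neg,
              _root_.map_sub, Complex.conj_conj]
            ring
          · simp only [_root_.map_add, _root_.map_mul, _root_.map_zero, map_neg,
              _root_.map_sub, Complex.conj_conj] at hD ⊢
            linear_combination hD
    · refine ⟨!![a - conj d, conj c; c, 0],
        isHerm2 hρ' (by simp) (by simp), ?_, ?_⟩
      · rw [isUnit_iff_ne_zero, Matrix.det_fin_two_of]
        have : (a - conj d) * 0 - conj c * c = -(conj c * c) := by ring
        rw [this]
        exact neg_ne_zero.mpr (mul_ne_zero (conj_ne_zero hc) hc)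
      · rw [Matrix.mul_fin_two]
        refine isHerm2 ?_ ?_ ?_
        · simp only [_root_.map_add, _root_.map_mul, _root_.map_zero, _root_.map_sub,
            Complex.conj_conj]
          linear_combination (a + conj a) * hT - hD
        · simp only [_root_.map_add, _root_.map_mul, _root_.map_zero, _root_.map_sub,
            Complex.conj_conj]
          linear_combination c * hT
        · simp only [_root_.map_add, _root_.map_mul, _root_.map_zero, _root_.map_sub,
            Complex.conj_conj]
          ring

lemma step2 (B : M2) (hT : conj B.trace = B.trace) (hD : conj B.det = B.det) :
    ∃ S : M2, S.IsHermitian ∧ IsUnit S.det ∧ (B * S).IsHermitian := by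
  rw [Matrix.trace_fin_two] at hT
  rw [Matrix.det_fin_two] at hD
  simp only [_root_.map_add, _root_.map_sub, _root_.map_mul] at hT hD
  have := step2' (B 0 0) (B 0 1) (B 1 0) (B 1 1) hT hD
  rwa [← Matrix.eta_fin_two B] at this

/-- Every `K ∈ M₂(ℂ)` with real determinant is a product of three Hermitian matrices. -/
theorem real_det_eq_prod_three_hermitian (K : M2) (h : (K.det).im = 0) :
    ∃ V₁ V₂ V₃ : M2, V₁.IsHermitian ∧ V₂.IsHermitian ∧ V₃.IsHermitian ∧
      K = V₁ * V₂ * V₃ := by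
  obtain ⟨W, hW, hWu, hWdet, hWtr⟩ := step1 K
  have hdK : conj K.det = K.det := Complex.conj_eq_iff_im.mpr h
  have hD : conj (W * K).det = (W * K).det := by
    rw [Matrix.det_mul, _root_.map_mul, hWdet, hdK]
  obtain ⟨S, hS, hSu, hP⟩ := step2 (W * K) hWtr hD
  refine ⟨W⁻¹, W * K * S, S⁻¹, hW.inv, hP, hS.inv, ?_⟩
  have e1 : W⁻¹ * (W * K * S) * S⁻¹ = (W⁻¹ * W) * K * (S * S⁻¹) := by
    simp only [Matrix.mul_assoc]
  rw [e1, Matrix.nonsing_inv_mul W hWu, Matrix.mul_nonsing_inv S hSu, Matrix.one_mul,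
    Matrix.mul_one]
end

section
/- Let K ∈ M₂(ℂ) with det K = 1 or det K = −1, and set Φ := fromBlocks K 0 0 (K‡) ∈ M₄(ℂ). Then for every Hermitian v ∈ M₂(ℂ), Φ·γ(v) = (det K)·γ(K·v·Kᴴ)·Φ; equivalently, Φ·γ(v)·Φ⁻¹ = ± γ(K·v·Kᴴ) with the sign + exactly when det K = 1. (Thus the adjoint action of Spin on Minkowski vectors is v ↦ K·v·Kᴴ, up to the sign distinguishing Spin↑.) -/
open Matrix

/-- The adjoint action of a Spin element `Φ = fromBlocks K 0 0 (K‡)`, `det K = ±1`,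
on a Minkowski vector `v` (a Hermitian matrix): `Φ·γ(v) = (det K)·γ(K·v·Kᴴ)·Φ`,
with sign `+` exactly when `Φ ∈ Spin↑`, i.e. `det K = 1`. -/
theorem spin_adjoint_action (K : M2) (hdet : K.det = 1 ∨ K.det = -1)
    (v : M2) (hv : v.IsHermitian) :
    fromBlocks K 0 0 (ddag K) * diracGamma v
      = K.det • (diracGamma (K * v * Kᴴ) * fromBlocks K 0 0 (ddag K)) := by
  have hdK : (Kᴴ).det = K.det := by
    rw [det_conjTranspose]
    rcases hdet with h | h <;> simp [h]
  have hd2 : K.det * K.det = 1 := by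
    rcases hdet with h | h <;> rw [h] <;> ring
  rw [diracGamma, diracGamma, ddag, fromBlocks_multiply, fromBlocks_multiply,
    fromBlocks_smul]
  simp only [mul_zero, zero_mul, add_zero, zero_add, smul_zero, Matrix.mul_smul,
    Matrix.smul_mul, mul_assoc, mul_adjugate, hdK, adjugate_mul_distrib,
    adjugate_mul, Matrix.mul_one, smul_smul, mul_smul_comm]
  have h : K.det * ((Real.sqrt 2 : ℂ) * K.det) = (Real.sqrt 2 : ℂ) := by
    rw [mul_comm, mul_assoc, hd2, mul_one]
  rw [h]
end

section
/- Let u, v ∈ ℂ² with δ := u₀v₁ − u₁v₀ ≠ 0, and let p ∈ M₂(ℂ) be a positive-definite Hermitian matrix with det p = |δ|². Then the following are equivalent: (i) p = u·uᴴ + v·vᴴ; (ii) uᴴ·adj(p)·v = 0 and uᴴ·adj(p)·u = |δ|²; (iii) uᴴ·adj(p)·v = 0 and vᴴ·adj(p)·v = |δ|². (These are the matrix forms of conditions (i), (v), (v′) characterizing the pairs of spinors generating a given timelike future-pointing momentum.) -/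
open Matrix
open scoped ComplexOrder

private lemma aux_swap (a b c d u0 u1 v0 v1 cu0 cu1 cv0 cv1 : ℂ)
    (hE : (u0*v1 - u1*v0) * (cu0*cv1 - cu1*cv0) ≠ 0)
    (hdet : a*d - b*c = (u0*v1 - u1*v0) * (cu0*cv1 - cu1*cv0))
    (h2 : cu0*(d*v0 - b*v1) + cu1*(a*v1 - c*v0) = 0)
    (h2c : cv0*(d*u0 - b*u1) + cv1*(a*u1 - c*u0) = 0)
    (h3 : cu0*(d*u0 - b*u1) + cu1*(a*u1 - c*u0)
      = (u0*v1 - u1*v0) * (cu0*cv1 - cu1*cv0)) :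
    cv0*(d*v0 - b*v1) + cv1*(a*v1 - c*v0)
      = (u0*v1 - u1*v0) * (cu0*cv1 - cu1*cv0) := by
  refine mul_left_cancel₀ hE ?_
  linear_combination ((u0*v1 - u1*v0) * (cu0*cv1 - cu1*cv0))*hdet
    + (cu0*(d*v0 - b*v1) + cu1*(a*v1 - c*v0))*h2c
    - (cv0*(d*v0 - b*v1) + cv1*(a*v1 - c*v0))*h3

private lemma aux_bwd (a b c d u0 u1 v0 v1 cu0 cu1 cv0 cv1 : ℂ)
    (hE : (u0*v1 - u1*v0) * (cu0*cv1 - cu1*cv0) ≠ 0)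
    (hdet : a*d - b*c = (u0*v1 - u1*v0) * (cu0*cv1 - cu1*cv0))
    (h2 : cu0*(d*v0 - b*v1) + cu1*(a*v1 - c*v0) = 0)
    (h2c : cv0*(d*u0 - b*u1) + cv1*(a*u1 - c*u0) = 0)
    (h3 : cu0*(d*u0 - b*u1) + cu1*(a*u1 - c*u0)
      = (u0*v1 - u1*v0) * (cu0*cv1 - cu1*cv0)) :
    a = u0*cu0 + v0*cv0 ∧ b = u0*cu1 + v0*cv1 ∧ c = u1*cu0 + v1*cv0 ∧
      d = u1*cu1 + v1*cv1 := by
  have h4 : cv0*(d*v0 - b*v1) + cv1*(a*v1 - c*v0)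
      = (u0*v1 - u1*v0) * (cu0*cv1 - cu1*cv0) :=
    aux_swap a b c d u0 u1 v0 v1 cu0 cu1 cv0 cv1 hE hdet h2 h2c h3
  refine ⟨mul_left_cancel₀ hE ?_, mul_left_cancel₀ hE ?_,
    mul_left_cancel₀ hE ?_, mul_left_cancel₀ hE ?_⟩
  · linear_combination (u0*cu0)*h4 - (u0*cv0)*h2 - (v0*cu0)*h2c + (v0*cv0)*h3
  · linear_combination (u0*cu1)*h4 - (u0*cv1)*h2 - (v0*cu1)*h2c + (v0*cv1)*h3
  · linear_combination (u1*cu0)*h4 - (u1*cv0)*h2 - (v1*cu0)*h2c + (v1*cv0)*h3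
  · linear_combination (u1*cu1)*h4 - (u1*cv1)*h2 - (v1*cu1)*h2c + (v1*cv1)*h3

/-- Characterization of the pairs of spinors generating a given timelike future-pointing
momentum: for `u, v ∈ ℂ²` with `δ := u₀v₁ − u₁v₀ ≠ 0` and `p` positive-definite
Hermitian with `det p = |δ|²`, the conditions
(i) `p = u·uᴴ + v·vᴴ`,
(ii) `uᴴ·adj(p)·v = 0 ∧ uᴴ·adj(p)·u = |δ|²`,
(iii) `uᴴ·adj(p)·v = 0 ∧ vᴴ·adj(p)·v = |δ|²`
are equivalent. -/
theorem momentum_generating_pair_characterization (u v : Fin 2 → ℂ)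
    (hδ : u 0 * v 1 - u 1 * v 0 ≠ 0) (p : M2) (hp : p.PosDef)
    (hdet : p.det = (Complex.normSq (u 0 * v 1 - u 1 * v 0) : ℂ)) :
    ((p = vecMulVec u (star u) + vecMulVec v (star v))
      ↔ (star u ⬝ᵥ (p.adjugate *ᵥ v) = 0 ∧
          star u ⬝ᵥ (p.adjugate *ᵥ u)
            = (Complex.normSq (u 0 * v 1 - u 1 * v 0) : ℂ))) ∧
    ((p = vecMulVec u (star u) + vecMulVec v (star v))
      ↔ (star u ⬝ᵥ (p.adjugate *ᵥ v) = 0 ∧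
          star v ⬝ᵥ (p.adjugate *ᵥ v)
            = (Complex.normSq (u 0 * v 1 - u 1 * v 0) : ℂ))) := by
  obtain ⟨h1, -⟩ := hp
  have hherm : ∀ i j, star (p j i) = p i j := fun i j => by
    have := congrFun (congrFun h1 i) j
    simpa [Matrix.conjTranspose_apply] using this
  have hδc : star (u 0) * star (v 1) - star (u 1) * star (v 0) ≠ 0 := by
    have h := star_ne_zero.mpr hδ
    rw [star_sub, star_mul', star_mul'] at h
    exact h
  have hN : (Complex.normSq (u 0 * v 1 - u 1 * v 0) : ℂ)
      = (u 0 * v 1 - u 1 * v 0) * (star (u 0) * star (v 1) - star (u 1) * star (v 0)) := by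
    rw [← Complex.mul_conj]
    congr 1
    rw [map_sub, _root_.map_mul, _root_.map_mul]
    rfl
  have hE : (u 0 * v 1 - u 1 * v 0)
      * (star (u 0) * star (v 1) - star (u 1) * star (v 0)) ≠ 0 := mul_ne_zero hδ hδc
  have hdet' : p 0 0 * p 1 1 - p 0 1 * p 1 0
      = (u 0 * v 1 - u 1 * v 0) * (star (u 0) * star (v 1) - star (u 1) * star (v 0)) := by
    rw [← hN, ← hdet, Matrix.det_fin_two]
  -- forward direction: all three scalar conditions follow from p = u uᴴ + v vᴴ
  have fwd : p = vecMulVec u (star u) + vecMulVec v (star v) →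
      star u ⬝ᵥ (p.adjugate *ᵥ v) = 0 ∧
      star u ⬝ᵥ (p.adjugate *ᵥ u) = (Complex.normSq (u 0 * v 1 - u 1 * v 0) : ℂ) ∧
      star v ⬝ᵥ (p.adjugate *ᵥ v) = (Complex.normSq (u 0 * v 1 - u 1 * v 0) : ℂ) := by
    intro hpq
    subst hpq
    refine ⟨?_, ?_, ?_⟩ <;>
      simp only [Matrix.adjugate_fin_two, dotProduct, Matrix.mulVec, Fin.sum_univ_two,
        Matrix.of_apply, Matrix.cons_val', Matrix.cons_val_zero, Matrix.cons_val_one,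
        Matrix.head_cons, Matrix.empty_val', Matrix.cons_val_fin_one, Matrix.head_fin_const,
        Pi.star_apply, Matrix.add_apply, Matrix.vecMulVec_apply, hN] <;> ring
  -- backward direction from (ii)
  have bwd : star u ⬝ᵥ (p.adjugate *ᵥ v) = 0 →
      star u ⬝ᵥ (p.adjugate *ᵥ u) = (Complex.normSq (u 0 * v 1 - u 1 * v 0) : ℂ) →
      p = vecMulVec u (star u) + vecMulVec v (star v) := by
    intro h2 h3
    simp only [Matrix.adjugate_fin_two, dotProduct, Matrix.mulVec, Fin.sum_univ_two,
      Matrix.of_apply, Matrix.cons_val', Matrix.cons_val_zero, Matrix.cons_val_one,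
      Matrix.head_cons, Matrix.empty_val', Matrix.cons_val_fin_one, Matrix.head_fin_const,
      Pi.star_apply, hN] at h2 h3
    have h2s : star (u 0) * (p 1 1 * v 0 - p 0 1 * v 1)
        + star (u 1) * (p 0 0 * v 1 - p 1 0 * v 0) = 0 := by linear_combination h2
    have h3s : star (u 0) * (p 1 1 * u 0 - p 0 1 * u 1)
        + star (u 1) * (p 0 0 * u 1 - p 1 0 * u 0)
        = (u 0 * v 1 - u 1 * v 0) * (star (u 0) * star (v 1) - star (u 1) * star (v 0)) := by
      linear_combination h3
    have h2c : star (v 0) * (p 1 1 * u 0 - p 0 1 * u 1)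
        + star (v 1) * (p 0 0 * u 1 - p 1 0 * u 0) = 0 := by
      have h := congrArg star h2s
      simp only [star_add, star_mul', star_sub, star_zero, star_star, hherm] at h
      linear_combination h
    obtain ⟨e00, e01, e10, e11⟩ :=
      aux_bwd (p 0 0) (p 0 1) (p 1 0) (p 1 1) (u 0) (u 1) (v 0) (v 1)
        (star (u 0)) (star (u 1)) (star (v 0)) (star (v 1)) hE hdet' h2s h2c h3s
    ext i j
    fin_cases i <;> fin_cases j <;>
      simp only [Matrix.add_apply, Matrix.vecMulVec_apply, Pi.star_apply] <;>
      assumption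
  -- (iii) implies the second condition of (ii)
  have swap : star u ⬝ᵥ (p.adjugate *ᵥ v) = 0 →
      star v ⬝ᵥ (p.adjugate *ᵥ v) = (Complex.normSq (u 0 * v 1 - u 1 * v 0) : ℂ) →
      star u ⬝ᵥ (p.adjugate *ᵥ u) = (Complex.normSq (u 0 * v 1 - u 1 * v 0) : ℂ) := by
    intro h2 h4
    simp only [Matrix.adjugate_fin_two, dotProduct, Matrix.mulVec, Fin.sum_univ_two,
      Matrix.of_apply, Matrix.cons_val', Matrix.cons_val_zero, Matrix.cons_val_one,
      Matrix.head_cons, Matrix.empty_val', Matrix.cons_val_fin_one, Matrix.head_fin_const,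
      Pi.star_apply, hN] at h2 h4 ⊢
    have h2s : star (u 0) * (p 1 1 * v 0 - p 0 1 * v 1)
        + star (u 1) * (p 0 0 * v 1 - p 1 0 * v 0) = 0 := by linear_combination h2
    have h2c : star (v 0) * (p 1 1 * u 0 - p 0 1 * u 1)
        + star (v 1) * (p 0 0 * u 1 - p 1 0 * u 0) = 0 := by
      have h := congrArg star h2s
      simp only [star_add, star_mul', star_sub, star_zero, star_star, hherm] at h
      linear_combination h
    -- use aux_swap with u and v exchanged
    have hE' : (v 0 * u 1 - v 1 * u 0)
        * (star (v 0) * star (u 1) - star (v 1) * star (u 0)) ≠ 0 := by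
      intro hc; apply hE; linear_combination hc
    have hdet'' : p 0 0 * p 1 1 - p 0 1 * p 1 0
        = (v 0 * u 1 - v 1 * u 0) * (star (v 0) * star (u 1) - star (v 1) * star (u 0)) := by
      linear_combination hdet'
    have h4s : star (v 0) * (p 1 1 * v 0 - p 0 1 * v 1)
        + star (v 1) * (p 0 0 * v 1 - p 1 0 * v 0)
        = (v 0 * u 1 - v 1 * u 0) * (star (v 0) * star (u 1) - star (v 1) * star (u 0)) := by
      linear_combination h4
    have := aux_swap (p 0 0) (p 0 1) (p 1 0) (p 1 1) (v 0) (v 1) (u 0) (u 1)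
      (star (v 0)) (star (v 1)) (star (u 0)) (star (u 1)) hE' hdet'' h2c h2s h4s
    linear_combination this
  constructor
  · exact ⟨fun h => ⟨(fwd h).1, (fwd h).2.1⟩, fun ⟨h2, h3⟩ => bwd h2 h3⟩
  · exact ⟨fun h => ⟨(fwd h).1, (fwd h).2.2⟩, fun ⟨h2, h4⟩ => bwd h2 (swap h2 h4)⟩
end

section
/- Let u, v, u', v' ∈ ℂ² be such that p := u·uᴴ + v·vᴴ is invertible and u·uᴴ + v·vᴴ = u'·u'ᴴ + v'·v'ᴴ. Then there exists a unique K ∈ M₂(ℂ) with K·u = u' and K·v = v'; moreover this K satisfies Kᴴ·adj(p)·K = adj(p) (K is unitary for the Hermitian inner product determined by adj(p)) and |det K| = 1. (This is the U(2) group-affine structure of the fibres of the bundle of spinor pairs over the space of timelike momenta.) -/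
open Matrix

namespace Matrix

variable {m n R : Type*}

theorem mul_transpose_of_eq_iff [Fintype m] [NonUnitalNonAssocSemiring R] (K : Matrix m m R)
    (c c' : n → m → R) : K * (of c)ᵀ = (of c')ᵀ ↔ ∀ j, K *ᵥ c j = c' j := by
  simp only [← ext_iff, funext_iff, mul_apply, transpose_apply, of_apply, mulVec, dotProduct]
  exact forall_comm

theorem transpose_of_mul_conjTranspose [Fintype n] [NonUnitalSemiring R] [StarRing R]
    (c : n → m → R) : (of c)ᵀ * (of c)ᵀᴴ = ∑ j, vecMulVec (c j) (star (c j)) := by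
  ext i k
  simp [mul_apply, vecMulVec_apply, sum_apply]

theorem existsUnique_mul_eq [Fintype m] [DecidableEq m] [CommRing R] {A : Matrix m m R}
    (hA : IsUnit A.det) (B : Matrix m m R) : ∃! K, K * A = B :=
  ⟨B * A⁻¹, nonsing_inv_mul_cancel_right _ _ hA,
    fun K hK => by rw [← hK, mul_nonsing_inv_cancel_right _ _ hA]⟩

section Congruence

variable [Fintype m] [DecidableEq m] [CommRing R] [StarRing R] {K P : Matrix m m R}

theorem det_mul_star_det_eq_one_of_mul_mul_conjTranspose_eq (hP : IsUnit P.det)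
    (hK : K * P * Kᴴ = P) : K.det * star K.det = 1 := by
  have h := congrArg det hK
  rw [det_mul, det_mul, det_conjTranspose, mul_right_comm] at h
  exact (IsUnit.mul_eq_right hP).1 h

theorem conjTranspose_mul_adjugate_mul_eq_of_mul_mul_conjTranspose_eq (hP : IsUnit P.det)
    (hK : K * P * Kᴴ = P) : Kᴴ * P.adjugate * K = P.adjugate := by
  have hadj : P.adjugate = Kᴴ.adjugate * P.adjugate * K.adjugate := by
    conv_lhs => rw [← hK]
    rw [adjugate_mul_distrib, adjugate_mul_distrib, Matrix.mul_assoc]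
  calc Kᴴ * P.adjugate * K
      = (Kᴴ * Kᴴ.adjugate) * P.adjugate * (K.adjugate * K) := by
        conv_lhs => rw [hadj]
        simp only [Matrix.mul_assoc]
    _ = (K.det * star K.det) • P.adjugate := by
        rw [mul_adjugate, adjugate_mul, det_conjTranspose, smul_mul, Matrix.one_mul,
          Matrix.mul_smul, Matrix.mul_one, smul_smul]
    _ = P.adjugate := by
        rw [det_mul_star_det_eq_one_of_mul_mul_conjTranspose_eq hP hK, one_smul]

end Congruence

theorem norm_det_eq_one_of_mul_mul_conjTranspose_eq {𝕜 : Type*} [RCLike 𝕜] [Fintype m]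
    [DecidableEq m] {K P : Matrix m m 𝕜} (hP : IsUnit P.det) (hK : K * P * Kᴴ = P) : ‖K.det‖ = 1 := by
  have h := det_mul_star_det_eq_one_of_mul_mul_conjTranspose_eq hP hK
  rw [RCLike.star_def, RCLike.mul_conj] at h
  exact (pow_eq_one_iff_of_nonneg (norm_nonneg _) two_ne_zero).1 (by exact_mod_cast h)

end Matrix

/-- U(2) group-affine structure of the fibres of the bundle of spinor pairs over the
space of timelike momenta: if `p := u·uᴴ + v·vᴴ` is invertible and equals
`u'·u'ᴴ + v'·v'ᴴ`, then there is a unique `K ∈ M₂(ℂ)` with `K·u = u'` and `K·v = v'`,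
and it satisfies `Kᴴ·adj(p)·K = adj(p)` and `|det K| = 1`. -/
theorem momentum_fiber_unitary_transition (u v u' v' : Fin 2 → ℂ)
    (hinv : IsUnit (vecMulVec u (star u) + vecMulVec v (star v)).det)
    (heq : vecMulVec u (star u) + vecMulVec v (star v)
         = vecMulVec u' (star u') + vecMulVec v' (star v')) :
    (∃! K : M2, K *ᵥ u = u' ∧ K *ᵥ v = v') ∧
    ∀ K : M2, K *ᵥ u = u' → K *ᵥ v = v' →
      (Kᴴ * (vecMulVec u (star u) + vecMulVec v (star v)).adjugate * K
          = (vecMulVec u (star u) + vecMulVec v (star v)).adjugate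
        ∧ ‖K.det‖ = 1) := by
  set p : M2 := vecMulVec u (star u) + vecMulVec v (star v)
  set A : M2 := (of ![u, v])ᵀ
  set A' : M2 := (of ![u', v'])ᵀ
  have hAA : A * Aᴴ = p := by simp [A, transpose_of_mul_conjTranspose, p]
  have hA'A' : A' * A'ᴴ = p := by simp [A', transpose_of_mul_conjTranspose, p, heq]
  have hsol : ∀ K : M2, K * A = A' ↔ K *ᵥ u = u' ∧ K *ᵥ v = v' := fun K => by
    simp [A, A', mul_transpose_of_eq_iff, Fin.forall_fin_two]
  have hA : IsUnit A.det := by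
    rw [← hAA, det_mul] at hinv
    exact isUnit_of_mul_isUnit_left hinv
  refine ⟨by simpa only [hsol] using existsUnique_mul_eq hA A', fun K hu hv => ?_⟩
  have hKA : K * A = A' := (hsol K).2 ⟨hu, hv⟩
  have hK : K * p * Kᴴ = p := by
    calc K * p * Kᴴ = (K * A) * (K * A)ᴴ := by
          rw [← hAA, conjTranspose_mul]; simp only [Matrix.mul_assoc]
      _ = p := by rw [hKA, hA'A']
  exact ⟨conjTranspose_mul_adjugate_mul_eq_of_mul_mul_conjTranspose_eq hinv hK,
    norm_det_eq_one_of_mul_mul_conjTranspose_eq hinv hK⟩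
end

section
/- Let u, u', c, c' ∈ ℂ² with cᴴ·u ≠ 0, and let E := the 2×2 matrix with rows (0, −1) and (1, 0) (the symplectic matrix). Then there exists a unique K ∈ M₂(ℂ) such that K·u = u' and K·(E·conj(c)) = E·conj(c'); moreover this K satisfies adj(Kᴴ)·c = c', and conversely K is the unique matrix satisfying K·u = u' and adj(Kᴴ)·c = c'. (In spinor terms: given ψ = (u,χ), ψ' = (u',χ') in W with ⟨χ̄,u⟩ ≠ 0, there is a unique automorphism K of U with K u = u' and K χ̄^# = χ̄'^#, and it satisfies χ' = K‡ χ.) -/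
open Matrix

/-- The symplectic matrix `E` with rows `(0, −1)` and `(1, 0)`. -/
def symplE : M2 := !![0, -1; 1, 0]

/-! The vectors `u` and `E c̄` form a basis of `ℂ²` exactly when `det [u, E c̄] = cᴴ u ≠ 0`, so a
matrix is pinned down by prescribing its values on them. For the second condition, the `2 × 2`
identity `E · adj M = Mᵀ · E` gives `E · conj (adj (Kᴴ) c) = K (E c̄)`; since `x ↦ E x̄` is
injective, `K (E c̄) = E c̄'` holds iff `adj (Kᴴ) c = c'`. -/

namespace Matrix

variable {n R : Type*} [Fintype n] [DecidableEq n] [CommRing R]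

theorem existsUnique_mulVec_eq_of_isUnit_det (b b' : n → n → R) (hb : IsUnit (of b).det) :
    ∃! K : Matrix n n R, ∀ j, K *ᵥ b j = b' j := by
  have hK : ∀ K : Matrix n n R, (∀ j, K *ᵥ b j = b' j) ↔ of b * Kᵀ = of b' := fun K => by
    simp only [← Matrix.ext_iff, funext_iff, mul_apply_eq_vecMul, vecMul_transpose]
    rfl
  refine ⟨((of b)⁻¹ * of b')ᵀ, (hK _).2 ?_, fun K hKb => ?_⟩
  · rw [transpose_transpose, mul_nonsing_inv_cancel_left _ _ hb]
  · rw [← transpose_transpose K, ← (hK K).1 hKb, nonsing_inv_mul_cancel_left _ _ hb]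

end Matrix

theorem symplE_mul_adjugate (M : M2) : symplE * M.adjugate = Mᵀ * symplE := by
  ext i j
  fin_cases i <;> fin_cases j <;> simp [symplE, adjugate_fin_two, Matrix.mul_apply]

theorem symplE_mulVec_star_injective : Function.Injective fun x : Fin 2 → ℂ => symplE *ᵥ star x :=
  (mulVec_injective_of_det_ne_zero (by simp [symplE])).comp star_injective

theorem symplE_mulVec_star_adjugate_conjTranspose_mulVec (K : M2) (c : Fin 2 → ℂ) :
    symplE *ᵥ star ((Kᴴ).adjugate *ᵥ c) = K *ᵥ (symplE *ᵥ star c) := by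
  rw [star_mulVec, ← adjugate_conjTranspose, conjTranspose_conjTranspose, ← mulVec_transpose,
    adjugate_transpose, mulVec_mulVec, symplE_mul_adjugate, transpose_transpose, mulVec_mulVec]

theorem det_of_symplE_mulVec_star (u c : Fin 2 → ℂ) :
    (of ![u, symplE *ᵥ star c]).det = star c ⬝ᵥ u := by
  simp [det_fin_two, symplE, dotProduct, Fin.sum_univ_two]
  ring

/-- Given 4-spinors `ψ = (u,χ)` and `ψ' = (u',χ')` (with `χ, χ'` encoded by the
component vectors `c, c'`) such that `⟨χ̄,u⟩ = cᴴ·u ≠ 0`, there is a unique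
`K ∈ M₂(ℂ)` with `K·u = u'` and `K·(E·c̄) = E·c̄'` (i.e. `K u = u'`,
`K χ̄^# = χ̄'^#`); moreover this `K` satisfies `adj(Kᴴ)·c = c'` (i.e. `χ' = K‡ χ`),
and conversely `K` is the unique matrix with `K·u = u'` and `adj(Kᴴ)·c = c'`. -/
theorem spinor_pair_transition (u u' c c' : Fin 2 → ℂ) (h : star c ⬝ᵥ u ≠ 0) :
    (∃! K : M2, K *ᵥ u = u' ∧ K *ᵥ (symplE *ᵥ star c) = symplE *ᵥ star c') ∧
    ∀ K : M2,
      (K *ᵥ u = u' ∧ K *ᵥ (symplE *ᵥ star c) = symplE *ᵥ star c')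
        ↔ (K *ᵥ u = u' ∧ (Kᴴ).adjugate *ᵥ c = c') := by
  have hdet : IsUnit (of ![u, symplE *ᵥ star c]).det := by
    rw [det_of_symplE_mulVec_star]
    exact h.isUnit
  refine ⟨?_, fun K => and_congr_right fun _ => ?_⟩
  · simpa [Fin.forall_fin_two] using
      existsUnique_mulVec_eq_of_isUnit_det _ ![u', symplE *ᵥ star c'] hdet
  · rw [← symplE_mulVec_star_adjugate_conjTranspose_mulVec, symplE_mulVec_star_injective.eq_iff]
end

section
/- Let u, u', c, c' ∈ ℂ² be such that δ := cᴴ·u and δ' := c'ᴴ·u' are real and positive, and suppose u·uᴴ + adj(c·cᴴ) = u'·u'ᴴ + adj(c'·c'ᴴ) =: q (i.e. ψ = (u,χ) and ψ' = (u',χ') lie in W⁺ over the same timelike momentum). Let E be the 2×2 matrix with rows (0, −1) and (1, 0), and let K be the unique matrix in M₂(ℂ) with K·u = u' and K·(E·conj(c)) = E·conj(c'). Then det K = 1 and Kᴴ·adj(q)·K = adj(q); that is, K is special unitary for the Hermitian inner product determined by adj(q). -/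
open Matrix

/-- If `ψ = (u,χ)` and `ψ' = (u',χ')` (with `χ, χ'` encoded by the component vectors
`c, c'`) lie in `W⁺` — i.e. `δ := cᴴ·u` and `δ' := c'ᴴ·u'` are real and positive — over
the same timelike momentum `q := u·uᴴ + adj(c·cᴴ) = u'·u'ᴴ + adj(c'·c'ᴴ)`, then the
unique `K` with `K·u = u'` and `K·(E·c̄) = E·c̄'` is special unitary for the Hermitian
inner product determined by `adj(q)`: `det K = 1` and `Kᴴ·adj(q)·K = adj(q)`. -/
theorem Wplus_transition_special_unitary (u u' c c' : Fin 2 → ℂ)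
    (hδre : 0 < (star c ⬝ᵥ u).re) (hδim : (star c ⬝ᵥ u).im = 0)
    (hδ're : 0 < (star c' ⬝ᵥ u').re) (hδ'im : (star c' ⬝ᵥ u').im = 0)
    (heq : vecMulVec u (star u) + (vecMulVec c (star c)).adjugate
         = vecMulVec u' (star u') + (vecMulVec c' (star c')).adjugate)
    (K : M2) (hKu : K *ᵥ u = u')
    (hKc : K *ᵥ (symplE *ᵥ star c) = symplE *ᵥ star c') :
    K.det = 1 ∧
    Kᴴ * (vecMulVec u (star u) + (vecMulVec c (star c)).adjugate).adjugate * K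
      = (vecMulVec u (star u) + (vecMulVec c (star c)).adjugate).adjugate := by
  set S : M2 := !![u 0, -(star (c 1)); u 1, star (c 0)] with hS
  set S' : M2 := !![u' 0, -(star (c' 1)); u' 1, star (c' 0)] with hS'
  have hKS : K * S = S' := by
    have h0 := congrFun hKu 0
    have h1 := congrFun hKu 1
    have h2 := congrFun hKc 0
    have h3 := congrFun hKc 1
    simp [symplE, mulVec, dotProduct, Fin.sum_univ_two] at h0 h1 h2 h3
    ext i j
    fin_cases i <;> fin_cases j <;>
      simp [hS, hS', Matrix.mul_apply, Fin.sum_univ_two] <;>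
      first
      | linear_combination h0 | linear_combination h1
      | linear_combination h2 | linear_combination h3
  have hq : S * Sᴴ = vecMulVec u (star u) + (vecMulVec c (star c)).adjugate := by
    ext i j
    fin_cases i <;> fin_cases j <;>
      simp [hS, Matrix.mul_apply, Fin.sum_univ_two, conjTranspose_apply,
        vecMulVec_apply, Matrix.adjugate_fin_two] <;> ring
  have hq' : S' * S'ᴴ = vecMulVec u' (star u') + (vecMulVec c' (star c')).adjugate := by
    ext i j
    fin_cases i <;> fin_cases j <;>
      simp [hS', Matrix.mul_apply, Fin.sum_univ_two, conjTranspose_apply,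
        vecMulVec_apply, Matrix.adjugate_fin_two] <;> ring
  have hdS : S.det = star c ⬝ᵥ u := by
    simp [hS, Matrix.det_fin_two, dotProduct, Fin.sum_univ_two]; ring
  have hdS' : S'.det = star c' ⬝ᵥ u' := by
    simp [hS', Matrix.det_fin_two, dotProduct, Fin.sum_univ_two]; ring
  set δ : ℂ := star c ⬝ᵥ u with hδdef
  set δ' : ℂ := star c' ⬝ᵥ u' with hδ'def
  have hstarδ : star δ = δ := Complex.ext (by simp) (by simp [hδim])
  have hstarδ' : star δ' = δ' := Complex.ext (by simp) (by simp [hδ'im])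
  have hdq : (S * Sᴴ).det = δ * δ := by
    rw [det_mul, det_conjTranspose, hdS, hstarδ]
  have hdq' : (S' * S'ᴴ).det = δ' * δ' := by
    rw [det_mul, det_conjTranspose, hdS', hstarδ']
  have hδδ : δ * δ = δ' * δ' := by
    rw [← hdq, ← hdq', hq, hq', heq]
  have hδeq : δ = δ' := by
    have hre : δ.re * δ.re = δ'.re * δ'.re := by
      have := congrArg Complex.re hδδ
      simpa [Complex.mul_re, hδim, hδ'im] using this
    have : δ.re = δ'.re := by nlinarith
    exact Complex.ext this (hδim.trans hδ'im.symm)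
  have hδne : δ ≠ 0 := by
    intro h; rw [h] at hδre; simp at hδre
  have hdetK : K.det = 1 := by
    have h : K.det * δ = δ := by
      rw [← hdS, ← det_mul, hKS, hdS', ← hδeq]
      exact hdS.symm
    have := mul_right_cancel₀ hδne (h.trans (one_mul δ).symm)
    exact this
  refine ⟨hdetK, ?_⟩
  have hK1 : K.adjugate * K = 1 := by
    rw [Matrix.adjugate_mul, hdetK, one_smul]
  have hK2 : Kᴴ * (Kᴴ).adjugate = 1 := by
    rw [Matrix.mul_adjugate, det_conjTranspose, hdetK]; simp
  set A : M2 := (vecMulVec u (star u) + (vecMulVec c (star c)).adjugate).adjugate with hA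
  have hq2 : A = (Kᴴ).adjugate * A * K.adjugate := by
    conv_lhs => rw [hA, heq, ← hq', ← hKS]
    rw [conjTranspose_mul, Matrix.adjugate_mul_distrib, Matrix.adjugate_mul_distrib,
      Matrix.adjugate_mul_distrib, hA, ← hq, Matrix.adjugate_mul_distrib]
    noncomm_ring
  conv_lhs => rw [hq2]
  have hassoc : Kᴴ * ((Kᴴ).adjugate * A * K.adjugate) * K
      = (Kᴴ * (Kᴴ).adjugate) * A * (K.adjugate * K) := by noncomm_ring
  rw [hassoc, hK1, hK2, one_mul, mul_one]
end
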